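/- (Swapping lemma, scalar first-order filter) Let a, u : ℝ → ℝ be differentiable functions, and let v be the solution of v' = −v + u with v(0) = 0, and let w be the solution of w' = −w + a·u with w(0) = 0. Then w(t) = a(t) v(t) − z(t), where z solves z' = −z + a'·v with z(0) = a(0) v(0) = 0. -/

import Mathlib

open Real

theorem eq_mul_exp_of_hasDerivAt_const_mul {f : ℝ → ℝ} (c : ℝ)
    (hf : ∀ t, HasDerivAt f (c * f t) t) (t : ℝ) : f t = f 0 * exp (c * t) := by
  set g : ℝ → ℝ := fun s => exp (-(c * s)) * f s
  have hg : ∀ s, HasDerivAt g 0 s := fun s => by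
    have hexp : HasDerivAt (fun s => exp (-(c * s))) (exp (-(c * s)) * -c) s :=
      ((hasDerivAt_id s).const_mul c).neg.exp.congr_deriv (by simp)
    exact (hexp.mul (hf s)).congr_deriv (by ring)
  have hconst : g t = g 0 :=
    is_const_of_deriv_eq_zero (fun s => (hg s).differentiableAt) (fun s => (hg s).deriv) t 0
  calc f t = g t * exp (c * t) := by
        rw [mul_right_comm, ← exp_add, neg_add_cancel, exp_zero, one_mul]
    _ = f 0 * exp (c * t) := by simp [hconst, g]

theorem swapping_lemma_general (a u v w z : ℝ → ℝ)
    (ha : Differentiable ℝ a)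
    (hv : Differentiable ℝ v) (hw : Differentiable ℝ w) (hz : Differentiable ℝ z)
    (hveq : ∀ t, deriv v t = -v t + u t) (hv0 : v 0 = 0)
    (hweq : ∀ t, deriv w t = -w t + a t * u t) (hw0 : w 0 = 0)
    (hzeq : ∀ t, deriv z t = -z t + deriv a t * v t) (hz0 : z 0 = 0) :
    ∀ t, w t = a t * v t - z t := by
  set e : ℝ → ℝ := fun t => w t - a t * v t + z t
  -- The `u`-terms and the `a' v`-terms cancel, leaving e' = -e.
  have he : ∀ t, HasDerivAt e (-1 * e t) t := fun t => by
    refine (((hw t).hasDerivAt.sub ((ha t).hasDerivAt.mul (hv t).hasDerivAt)).add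
      (hz t).hasDerivAt).congr_deriv ?_
    rw [hweq, hveq, hzeq]
    ring
  intro t
  have het : w t - a t * v t + z t = 0 := by
    simpa [e, hw0, hv0, hz0] using eq_mul_exp_of_hasDerivAt_const_mul (-1) he t
  linarith

theorem swapping_lemma (a u v w z : ℝ → ℝ)
    (ha : Differentiable ℝ a) (hu : Differentiable ℝ u)
    (hv : Differentiable ℝ v) (hw : Differentiable ℝ w) (hz : Differentiable ℝ z)
    (hveq : ∀ t, deriv v t = -v t + u t) (hv0 : v 0 = 0)
    (hweq : ∀ t, deriv w t = -w t + a t * u t) (hw0 : w 0 = 0)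
    (hzeq : ∀ t, deriv z t = -z t + deriv a t * v t) (hz0 : z 0 = 0) :
    ∀ t, w t = a t * v t - z t :=
  swapping_lemma_general a u v w z ha hv hw hz hveq hv0 hweq hw0 hzeq hz0
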